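/- Let Q be a medial quandle which is the sum of an indecomposable affine mesh ((A_i)_{i∈I}; φ_{i,j}; c_{i,j}) over a set I. Then the following are equivalent: (1) Q is 2-reductive; (2) for every j ∈ I there exists i ∈ I with φ_{i,j} = 0; (3) φ_{i,j} = 0 for all i,j ∈ I. -/

import Mathlib

/-- An affine mesh over an index set `I`: abelian groups `A i`, homomorphisms
`φ i j : A i →+ A j`, and constants `c i j ∈ A j`, satisfying (M1)–(M4). -/
structure AffineMesh (I : Type*) (A : I → Type*) [∀ i, AddCommGroup (A i)] where
  φ : ∀ i j : I, A i →+ A j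
  c : ∀ i j : I, A j
  m1 : ∀ i : I, Function.Bijective fun x : A i => x - φ i i x
  m2 : ∀ i : I, c i i = 0
  m3 : ∀ i j j' k : I, (φ j k).comp (φ i j) = (φ j' k).comp (φ i j')
  m4 : ∀ i j k : I, φ j k (c i j) = φ k k (c i k - c j k)

/-- The sum of an affine mesh: the binary operation on the disjoint union of the fibres,
`a * b = c i j + φ i j a + (1 - φ j j) b` for `a ∈ A i`, `b ∈ A j`. -/
def AffineMesh.sum {I : Type*} {A : I → Type*} [∀ i, AddCommGroup (A i)]
    (M : AffineMesh I A) (x y : Σ i, A i) : Σ i, A i :=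
  ⟨y.1, M.c x.1 y.1 + M.φ x.1 y.1 x.2 + (y.2 - M.φ y.1 y.1 y.2)⟩

/-- An affine mesh is indecomposable if every fibre `A j` is generated by the
sets `c i j + Im (φ i j)`, `i ∈ I`. -/
def AffineMesh.Indecomposable {I : Type*} {A : I → Type*} [∀ i, AddCommGroup (A i)]
    (M : AffineMesh I A) : Prop :=
  ∀ j : I, AddSubgroup.closure (⋃ i : I, Set.range fun a : A i => M.c i j + M.φ i j a) = ⊤

/-!
Evaluating `(x * y) * y` shows that 2-reductivity forces every diagonal map `φ j j` to vanish
on the generators `c i j + φ i j a` of `A j`; a zero `φ i₀ j` in column `j` forces the same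
via (M3) and (M4). Conversely, if all `φ k k` kill these generators, then (M3) and (M4) rewrite
`φ j k (c i j + φ i j a)` as `φ k k (c i k + φ i k a) - φ k k (c j k)`, which is zero, so by
indecomposability every `φ j k` vanishes; and when all `φ` vanish, `(x * y) * y = y` is immediate.
-/

namespace AffineMesh

variable {I : Type*} {A : I → Type*} [∀ i, AddCommGroup (A i)] (M : AffineMesh I A)

theorem sum_sum_self {i j : I} (a : A i) (b : A j) :
    M.sum (M.sum ⟨i, a⟩ ⟨j, b⟩) ⟨j, b⟩ =
      ⟨j, M.φ j j (M.c i j + M.φ i j a) + (b - M.φ j j (M.φ j j b))⟩ := by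
  change (⟨j, M.c j j + M.φ j j (M.c i j + M.φ i j a + (b - M.φ j j b)) + (b - M.φ j j b)⟩ :
    Σ k, A k) = _
  rw [M.m2, zero_add, map_add, map_sub]
  congr 1
  abel

theorem hom_eq_zero_of_indecomposable (hind : M.Indecomposable) {j : I} {B : Type*}
    [AddCommGroup B] {f : A j →+ B} (hf : ∀ i (a : A i), f (M.c i j + M.φ i j a) = 0) :
    f = 0 :=
  AddMonoidHom.eq_of_eqOn_dense (hind j) <| by
    simp only [Set.EqOn, Set.mem_iUnion, Set.mem_range, forall_exists_index]
    rintro _ i a rfl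
    exact hf i a

theorem phi_eq_zero_of_phi_diag_generator_eq_zero (hind : M.Indecomposable)
    (h : ∀ i j (a : A i), M.φ j j (M.c i j + M.φ i j a) = 0) (j k : I) : M.φ j k = 0 := by
  refine M.hom_eq_zero_of_indecomposable hind fun i a => ?_
  have hcomp : M.φ j k (M.φ i j a) = M.φ k k (M.φ i k a) :=
    DFunLike.congr_fun (M.m3 i j k k) a
  have hc : M.φ k k (M.c j k) = 0 := by simpa using h j k 0
  calc M.φ j k (M.c i j + M.φ i j a)
      = M.φ k k (M.c i k + M.φ i k a) - M.φ k k (M.c j k) := by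
        rw [map_add, M.m4, hcomp, map_add, map_sub]; abel
    _ = 0 := by rw [h i k a, hc, sub_zero]

theorem phi_diag_generator_eq_zero_of_phi_eq_zero {i₀ j : I} (h : M.φ i₀ j = 0) (i : I)
    (a : A i) : M.φ j j (M.c i j + M.φ i j a) = 0 := by
  have hcomp : M.φ j j (M.φ i j a) = 0 := by
    rw [← AddMonoidHom.comp_apply, M.m3 i j i₀ j, AddMonoidHom.comp_apply, h,
      AddMonoidHom.zero_apply]
  -- By (M4) through `i₀`, `φ j j (c i' j)` is independent of `i'`, and it is 0 at `i' = j`.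
  have hc : ∀ i', M.φ j j (M.c i' j) = M.φ j j (M.c i₀ j) := fun i' => by
    have hm4 := M.m4 i' i₀ j
    rwa [h, AddMonoidHom.zero_apply, map_sub, eq_comm, sub_eq_zero] at hm4
  rw [map_add, hcomp, add_zero, hc, ← hc j, M.m2, map_zero]

end AffineMesh

theorem mesh_sum_two_reductive_iff_general {I : Type*} {A : I → Type*}
    [∀ i, AddCommGroup (A i)] (M : AffineMesh I A) (hind : M.Indecomposable) :
    ((∀ x y : Σ i, A i, M.sum (M.sum x y) y = y) ↔ ∀ j : I, ∃ i : I, M.φ i j = 0) ∧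
    ((∀ j : I, ∃ i : I, M.φ i j = 0) ↔ ∀ i j : I, M.φ i j = 0) := by
  have all_zero_of_column_zero (h2 : ∀ j : I, ∃ i : I, M.φ i j = 0) :
      ∀ i j : I, M.φ i j = 0 :=
    M.phi_eq_zero_of_phi_diag_generator_eq_zero hind fun i j =>
      M.phi_diag_generator_eq_zero_of_phi_eq_zero (h2 j).choose_spec i
  have reductive_of_all_zero (h3 : ∀ i j : I, M.φ i j = 0) :
      ∀ x y : Σ i, A i, M.sum (M.sum x y) y = y := by
    rintro ⟨i, a⟩ ⟨j, b⟩
    simp [M.sum_sum_self, h3]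
  have all_zero_of_reductive (h1 : ∀ x y : Σ i, A i, M.sum (M.sum x y) y = y) :
      ∀ i j : I, M.φ i j = 0 :=
    M.phi_eq_zero_of_phi_diag_generator_eq_zero hind fun i j a => by
      simpa [M.sum_sum_self] using h1 ⟨i, a⟩ ⟨j, 0⟩
  exact ⟨⟨fun h1 j => ⟨j, all_zero_of_reductive h1 j j⟩,
      fun h2 => reductive_of_all_zero (all_zero_of_column_zero h2)⟩,
    ⟨all_zero_of_column_zero, fun h3 j => ⟨j, h3 j j⟩⟩⟩

/-- Theorem 6.8: for a medial quandle which is the sum of an indecomposable affine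
mesh, the following are equivalent: (1) the quandle is 2-reductive;
(2) every column of the homomorphism matrix contains a zero; (3) all homomorphisms
of the mesh are zero. -/
theorem mesh_sum_two_reductive_iff {I : Type*} [Nonempty I] {A : I → Type*}
    [∀ i, AddCommGroup (A i)] (M : AffineMesh I A) (hind : M.Indecomposable) :
    ((∀ x y : Σ i, A i, M.sum (M.sum x y) y = y) ↔ ∀ j : I, ∃ i : I, M.φ i j = 0) ∧
    ((∀ j : I, ∃ i : I, M.φ i j = 0) ↔ ∀ i j : I, M.φ i j = 0) :=
  mesh_sum_two_reductive_iff_general M hind
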